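/- Let |q| ≤ 1 and ρ > 0. In the Banach algebra A_q(ρ) of absolutely convergent series Σ a_{ik} x^i y^k with norm Σ |a_{ik}| ρ^{i+k}, every continuous character λ vanishes on the closed two-sided ideal I_xy = { Σ_{i,k ≥ 1} a_{ik} x^i y^k }, and the common kernel of all continuous characters equals I_xy. -/

import Mathlib

/-- The set of elements of the Banach quantum plane given by series
`Σ_{i,k ≥ 1} a_{ik} x^i y^k` (the closed two-sided ideal `I_xy`). -/
def IxySet {A : Type*} [NormedRing A] [NormedAlgebra ℂ A] (ρ : ℝ) (x y : A) : Set A :=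
  {w : A | ∃ a : ℕ × ℕ → ℂ,
    (Summable fun p : ℕ × ℕ => ‖a p‖ * ρ ^ (p.1 + p.2)) ∧
    (∀ p : ℕ × ℕ, p.1 = 0 ∨ p.2 = 0 → a p = 0) ∧
    w = ∑' p : ℕ × ℕ, a p • (x ^ p.1 * y ^ p.2)}

/-!
Every element of `A_q(ρ)` is `Σ a_{ik} x^i y^k` with unique coefficients, so a weight `φ` with
`|φ_{ik}| ≤ ρ^{i+k}` defines a bounded functional `Σ a_{ik} φ_{ik}`. For `φ_{ik} = s^i t^k` with
`t s = q s t` this functional is multiplicative on monomials (the same `q`-commutation rule holds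
in the scalars), hence by density and continuity it is a character.

A character `χ` turns `y x = q x y` into `(1 - q) χ(x) χ(y) = 0`, so it kills every `x^i y^k` with
`i, k ≥ 1` and hence `I_xy`. Conversely, the characters at `(s, 0)` and `(0, s)` for `|s| ≤ ρ`
show that an element of the common kernel has `Σ_i a_{i0} s^i = 0 = Σ_k a_{0k} s^k` near `0`,
so by the identity theorem for power series its coefficients on both axes vanish.
-/

open Filter Topology

theorem hasSum_pi_single_one_smul {R M ι : Type*} [Semiring R] [AddCommMonoid M] [Module R M]
    [TopologicalSpace M] [DecidableEq ι] (e : ι → M) (i : ι) :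
    HasSum (fun j => (Pi.single i (1 : R) : ι → R) j • e j) (e i) := by
  simpa using hasSum_single (f := fun j => (Pi.single i (1 : R) : ι → R) j • e j) i
    fun j hj => by simp [hj]

theorem hasSum_norm_pi_single_one_mul {𝕜 ι : Type*} [NormedField 𝕜] [DecidableEq ι]
    (w : ι → ℝ) (i : ι) :
    HasSum (fun j => ‖(Pi.single i (1 : 𝕜) : ι → 𝕜) j‖ * w j) (w i) := by
  simpa using hasSum_single (f := fun j => ‖(Pi.single i (1 : 𝕜) : ι → 𝕜) j‖ * w j) i
    fun j hj => by simp [hj]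

section WeightedBasis

variable {𝕜 E ι : Type*} [NormedField 𝕜] [NormedAddCommGroup E] [NormedSpace 𝕜 E]
  {e : ι → E} {w : ι → ℝ}

theorem summable_norm_add_mul (hw : ∀ i, 0 ≤ w i) {a b : ι → 𝕜}
    (ha : Summable fun i => ‖a i‖ * w i) (hb : Summable fun i => ‖b i‖ * w i) :
    Summable fun i => ‖a i + b i‖ * w i :=
  (ha.add hb).of_nonneg_of_le (fun i => mul_nonneg (norm_nonneg _) (hw i)) fun i => by
    rw [← add_mul]; exact mul_le_mul_of_nonneg_right (norm_add_le _ _) (hw i)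

theorem summable_norm_sub_mul (hw : ∀ i, 0 ≤ w i) {a b : ι → 𝕜}
    (ha : Summable fun i => ‖a i‖ * w i) (hb : Summable fun i => ‖b i‖ * w i) :
    Summable fun i => ‖a i - b i‖ * w i :=
  (ha.add hb).of_nonneg_of_le (fun i => mul_nonneg (norm_nonneg _) (hw i)) fun i => by
    rw [← add_mul]; exact mul_le_mul_of_nonneg_right (norm_sub_le _ _) (hw i)

theorem summable_norm_mul_mul (c : 𝕜) {a : ι → 𝕜} (ha : Summable fun i => ‖a i‖ * w i) :
    Summable fun i => ‖c * a i‖ * w i := by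
  simpa only [norm_mul, mul_assoc] using ha.mul_left ‖c‖

theorem norm_eq_of_norm_tsum_smul_eq
    (hnorm : ∀ a : ι → 𝕜, (Summable fun i => ‖a i‖ * w i) →
      ‖∑' i, a i • e i‖ = ∑' i, ‖a i‖ * w i) (i : ι) :
    ‖e i‖ = w i := by
  classical
  have hsmul := hasSum_pi_single_one_smul (R := 𝕜) e i
  have hweight := hasSum_norm_pi_single_one_mul (𝕜 := 𝕜) w i
  simpa [hsmul.tsum_eq, hweight.tsum_eq] using hnorm _ hweight.summable

theorem summable_smul_of_summable_norm_mul [CompleteSpace E] (he : ∀ i, ‖e i‖ = w i)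
    {a : ι → 𝕜} (ha : Summable fun i => ‖a i‖ * w i) : Summable fun i => a i • e i :=
  ha.of_norm_bounded fun i => by rw [norm_smul, he]

theorem eq_of_tsum_smul_eq [CompleteSpace E]
    (hnorm : ∀ a : ι → 𝕜, (Summable fun i => ‖a i‖ * w i) →
      ‖∑' i, a i • e i‖ = ∑' i, ‖a i‖ * w i)
    (hw : ∀ i, 0 < w i) {a b : ι → 𝕜}
    (ha : Summable fun i => ‖a i‖ * w i) (hb : Summable fun i => ‖b i‖ * w i)
    (h : ∑' i, a i • e i = ∑' i, b i • e i) : a = b := by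
  have he := norm_eq_of_norm_tsum_smul_eq hnorm
  have hab := summable_norm_sub_mul (fun i => (hw i).le) ha hb
  have hzero : HasSum (fun i => ‖a i - b i‖ * w i) 0 := by
    convert hab.hasSum
    rw [← hnorm _ hab]
    simp_rw [sub_smul]
    rw [(summable_smul_of_summable_norm_mul he ha).tsum_sub
      (summable_smul_of_summable_norm_mul he hb), h, sub_self, norm_zero]
  funext i
  have hi := congrFun ((hasSum_zero_iff_of_nonneg fun i =>
    mul_nonneg (norm_nonneg _) (hw i).le).mp hzero) i
  simpa [(hw i).ne', sub_eq_zero] using hi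

theorem exists_linearMap_tsum_smul_eq [CompleteSpace E]
    (hnorm : ∀ a : ι → 𝕜, (Summable fun i => ‖a i‖ * w i) →
      ‖∑' i, a i • e i‖ = ∑' i, ‖a i‖ * w i)
    (hw : ∀ i, 0 < w i)
    (hspan : ∀ z : E, ∃ a : ι → 𝕜, (Summable fun i => ‖a i‖ * w i) ∧ z = ∑' i, a i • e i)
    {φ : ι → 𝕜} (hφ : ∀ a : ι → 𝕜, (Summable fun i => ‖a i‖ * w i) → Summable fun i => a i * φ i) :
    ∃ F : E →ₗ[𝕜] 𝕜, ∀ a : ι → 𝕜, (Summable fun i => ‖a i‖ * w i) →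
      F (∑' i, a i • e i) = ∑' i, a i * φ i := by
  have he := norm_eq_of_norm_tsum_smul_eq hnorm
  choose c hc hz using hspan
  have hc_tsum : ∀ a : ι → 𝕜, (Summable fun i => ‖a i‖ * w i) → c (∑' i, a i • e i) = a :=
    fun a ha => eq_of_tsum_smul_eq hnorm hw (hc _) ha (hz _).symm
  have hc_add : ∀ z z', c (z + z') = c z + c z' := fun z z' => by
    have hsum : z + z' = ∑' i, (c z + c z') i • e i := by
      simp only [Pi.add_apply, add_smul]
      rw [(summable_smul_of_summable_norm_mul he (hc z)).tsum_add
        (summable_smul_of_summable_norm_mul he (hc z')), ← hz z, ← hz z']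
    rw [hsum]
    exact hc_tsum _ (summable_norm_add_mul (fun i => (hw i).le) (hc z) (hc z'))
  have hc_smul : ∀ (r : 𝕜) z, c (r • z) = r • c z := fun r z => by
    have hsum : r • z = ∑' i, (r • c z) i • e i := by
      simp only [Pi.smul_apply, smul_eq_mul, mul_smul]
      rw [(summable_smul_of_summable_norm_mul he (hc z)).tsum_const_smul r, ← hz z]
    rw [hsum]
    exact hc_tsum _ (summable_norm_mul_mul r (hc z))
  refine ⟨{ toFun := fun z => ∑' i, c z i * φ i
            map_add' := fun z z' => by
              simp only [hc_add, Pi.add_apply, add_mul]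
              exact (hφ _ (hc z)).tsum_add (hφ _ (hc z'))
            map_smul' := fun r z => by
              simp only [hc_smul, Pi.smul_apply, smul_eq_mul, mul_assoc, RingHom.id_apply]
              exact (hφ _ (hc z)).tsum_mul_left r }, fun a ha => ?_⟩
  simp [hc_tsum a ha]

theorem exists_continuousLinearMap_tsum_smul_eq [CompleteSpace 𝕜] [CompleteSpace E]
    (hnorm : ∀ a : ι → 𝕜, (Summable fun i => ‖a i‖ * w i) →
      ‖∑' i, a i • e i‖ = ∑' i, ‖a i‖ * w i)
    (hw : ∀ i, 0 < w i)
    (hspan : ∀ z : E, ∃ a : ι → 𝕜, (Summable fun i => ‖a i‖ * w i) ∧ z = ∑' i, a i • e i)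
    {φ : ι → 𝕜} (hφ : ∀ i, ‖φ i‖ ≤ w i) :
    ∃ f : E →L[𝕜] 𝕜, ∀ a : ι → 𝕜, (Summable fun i => ‖a i‖ * w i) →
      f (∑' i, a i • e i) = ∑' i, a i * φ i := by
  have hterm : ∀ (a : ι → 𝕜) i, ‖a i * φ i‖ ≤ ‖a i‖ * w i := fun a i => by
    rw [norm_mul]; exact mul_le_mul_of_nonneg_left (hφ i) (norm_nonneg _)
  have hφ_norm : ∀ a : ι → 𝕜, (Summable fun i => ‖a i‖ * w i) →
      Summable fun i => ‖a i * φ i‖ := fun a ha =>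
    ha.of_nonneg_of_le (fun i => norm_nonneg _) (hterm a)
  obtain ⟨F, hF⟩ := exists_linearMap_tsum_smul_eq hnorm hw hspan fun a ha => (hφ_norm a ha).of_norm
  refine ⟨F.mkContinuous 1 fun z => ?_, hF⟩
  obtain ⟨a, ha, rfl⟩ := hspan z
  calc ‖F (∑' i, a i • e i)‖ ≤ ∑' i, ‖a i * φ i‖ := hF a ha ▸ norm_tsum_le_tsum_norm (hφ_norm a ha)
    _ ≤ ∑' i, ‖a i‖ * w i := (hφ_norm a ha).tsum_le_tsum (hterm a) ha
    _ = 1 * ‖∑' i, a i • e i‖ := by rw [one_mul, hnorm a ha]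

end WeightedBasis

section QCommute

variable {R A : Type*} [CommSemiring R] [Semiring A] [Algebra R A] {q : R} {x y : A}

theorem pow_mul_pow_of_mul_eq_smul (h : y * x = q • (x * y)) (k j : ℕ) :
    y ^ k * x ^ j = q ^ (k * j) • (x ^ j * y ^ k) := by
  have hx : ∀ n : ℕ, y ^ n * x = q ^ n • (x * y ^ n) := by
    intro n
    induction n with
    | zero => simp
    | succ n ih =>
      rw [pow_succ, mul_assoc, h, mul_smul_comm, ← mul_assoc, ih, smul_mul_assoc, smul_smul,
        ← pow_succ', mul_assoc, ← pow_succ]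
  induction j with
  | zero => simp
  | succ j ih =>
    rw [pow_succ x, ← mul_assoc, ih, smul_mul_assoc, mul_assoc, hx, mul_smul_comm, smul_smul,
      ← pow_add, ← mul_assoc, ← pow_succ, Nat.mul_succ]

theorem monomial_mul_monomial_of_mul_eq_smul (h : y * x = q • (x * y)) (a b c d : ℕ) :
    x ^ a * y ^ b * (x ^ c * y ^ d) = q ^ (b * c) • (x ^ (a + c) * y ^ (b + d)) := by
  rw [mul_assoc, ← mul_assoc (y ^ b), pow_mul_pow_of_mul_eq_smul h, smul_mul_assoc,
    mul_smul_comm, pow_add, pow_add, mul_assoc, mul_assoc]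

end QCommute

theorem AlgHom.map_mul_eq_zero_of_mul_eq_smul {𝕜 A : Type*} [Field 𝕜] [Ring A] [Algebra 𝕜 A]
    {q : 𝕜} (hq : q ≠ 1) {x y : A} (h : y * x = q • (x * y)) (χ : A →ₐ[𝕜] 𝕜) :
    χ x * χ y = 0 := by
  have hχ : χ y * χ x = q * (χ x * χ y) := by
    rw [← map_mul, h, map_smul, map_mul, smul_eq_mul]
  have : (1 - q) * (χ x * χ y) = 0 := by linear_combination hχ
  exact (mul_eq_zero.mp this).resolve_left (sub_ne_zero.mpr hq.symm)

theorem AlgHom.map_tsum_monomial_eq_zero {𝕜 A : Type*} [Field 𝕜] [TopologicalSpace 𝕜]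
    [T2Space 𝕜] [Ring A] [TopologicalSpace A] [Algebra 𝕜 A] {q : 𝕜} (hq : q ≠ 1) {x y : A}
    (hxy : y * x = q • (x * y)) (χ : A →ₐ[𝕜] 𝕜) (hχ : Continuous χ) {a : ℕ × ℕ → 𝕜}
    (ha : ∀ p : ℕ × ℕ, p.1 = 0 ∨ p.2 = 0 → a p = 0) :
    χ (∑' p : ℕ × ℕ, a p • (x ^ p.1 * y ^ p.2)) = 0 := by
  have hχxy := χ.map_mul_eq_zero_of_mul_eq_smul hq hxy
  have hterm : ∀ p : ℕ × ℕ, χ (a p • (x ^ p.1 * y ^ p.2)) = 0 := by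
    rintro ⟨_ | i, _ | k⟩
    · simp [ha (0, 0) (Or.inl rfl)]
    · simp [ha (0, k + 1) (Or.inl rfl)]
    · simp [ha (i + 1, 0) (Or.inr rfl)]
    · rw [map_smul, map_mul, map_pow, map_pow, pow_succ, pow_succ,
        mul_mul_mul_comm, hχxy, mul_zero, smul_zero]
  by_cases hsum : Summable fun p : ℕ × ℕ => a p • (x ^ p.1 * y ^ p.2)
  · simp [hsum.map_tsum χ hχ, hterm]
  · rw [tsum_eq_zero_of_not_summable hsum, map_zero]

theorem ContinuousLinearMap.map_mul_of_dense_span {R A : Type*} [CommSemiring R]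
    [TopologicalSpace R] [ContinuousMul R] [T2Space R] [Semiring A] [TopologicalSpace A]
    [ContinuousMul A] [Algebra R A] (f : A →L[R] R) {s : Set A}
    (hs : Dense (Submodule.span R s : Set A)) (h : ∀ a ∈ s, ∀ b ∈ s, f (a * b) = f a * f b)
    (a b : A) : f (a * b) = f a * f b := by
  -- One variable at a time: linearity extends the identity to the span, continuity to `A`.
  have h_span_left : ∀ a ∈ s, ∀ b ∈ Submodule.span R s, f (a * b) = f a * f b := fun a ha =>
    LinearMap.eqOn_span' (f := (f : A →ₗ[R] R) ∘ₗ LinearMap.mulLeft R a)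
      (g := f a • (f : A →ₗ[R] R)) fun b hb => h a ha b hb
  have h_span : ∀ b ∈ Submodule.span R s, ∀ a ∈ Submodule.span R s, f (a * b) = f a * f b :=
    fun b hb a ha => (LinearMap.eqOn_span' (f := (f : A →ₗ[R] R) ∘ₗ LinearMap.mulRight R b)
      (g := f b • (f : A →ₗ[R] R)) (fun a ha => (h_span_left a ha b hb).trans (mul_comm _ _))
      ha).trans (mul_comm _ _)
  have h_right : ∀ b ∈ Submodule.span R s, ∀ a, f (a * b) = f a * f b := fun b hb =>
    congrFun (Continuous.ext_on hs (by fun_prop) (by fun_prop) (h_span b hb))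
  exact congrFun (Continuous.ext_on hs (by fun_prop) (by fun_prop) (fun b hb => h_right b hb a)) b

theorem dense_span_of_forall_eq_tsum {R M ι : Type*} [Semiring R] [AddCommMonoid M] [Module R M]
    [TopologicalSpace M] {e : ι → M}
    (h : ∀ z : M, ∃ a : ι → R, Summable (fun i => a i • e i) ∧ z = ∑' i, a i • e i) :
    Dense (Submodule.span R (Set.range e) : Set M) := by
  intro z
  obtain ⟨a, ha, rfl⟩ := h z
  exact mem_closure_of_tendsto ha.hasSum (Eventually.of_forall fun s => Submodule.sum_mem _
    fun i _ => Submodule.smul_mem _ _ (Submodule.subset_span (Set.mem_range_self i)))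

section QuantumPlane

variable {𝕜 A : Type*} [NormedField 𝕜] [CompleteSpace 𝕜] [NormedRing A] [NormedAlgebra 𝕜 A]
  [CompleteSpace A]

theorem exists_continuous_algHom_tsum_monomial_eq {q : 𝕜} {ρ : ℝ} (hρ : 0 < ρ) {x y : A}
    (hxy : y * x = q • (x * y))
    (hnorm : ∀ a : ℕ × ℕ → 𝕜, (Summable fun p : ℕ × ℕ => ‖a p‖ * ρ ^ (p.1 + p.2)) →
      ‖∑' p : ℕ × ℕ, a p • (x ^ p.1 * y ^ p.2)‖ = ∑' p : ℕ × ℕ, ‖a p‖ * ρ ^ (p.1 + p.2))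
    (hsurj : ∀ z : A, ∃ a : ℕ × ℕ → 𝕜,
      (Summable fun p : ℕ × ℕ => ‖a p‖ * ρ ^ (p.1 + p.2)) ∧
      z = ∑' p : ℕ × ℕ, a p • (x ^ p.1 * y ^ p.2))
    {s t : 𝕜} (hs : ‖s‖ ≤ ρ) (ht : ‖t‖ ≤ ρ) (hst : t * s = q • (s * t)) :
    ∃ χ : A →ₐ[𝕜] 𝕜, Continuous χ ∧ ∀ a : ℕ × ℕ → 𝕜,
      (Summable fun p : ℕ × ℕ => ‖a p‖ * ρ ^ (p.1 + p.2)) →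
      χ (∑' p : ℕ × ℕ, a p • (x ^ p.1 * y ^ p.2)) = ∑' p : ℕ × ℕ, a p * (s ^ p.1 * t ^ p.2) := by
  have hw : ∀ p : ℕ × ℕ, 0 < ρ ^ (p.1 + p.2) := fun p => pow_pos hρ _
  obtain ⟨f, hf⟩ := exists_continuousLinearMap_tsum_smul_eq hnorm hw hsurj
    (φ := fun p => s ^ p.1 * t ^ p.2) fun p => by
      rw [norm_mul, norm_pow, norm_pow, pow_add]
      gcongr
  have he := norm_eq_of_norm_tsum_smul_eq hnorm
  have hf_monomial : ∀ i j : ℕ, f (x ^ i * y ^ j) = s ^ i * t ^ j := fun i j =>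
    calc f (x ^ i * y ^ j)
        = f (∑' r, (Pi.single (i, j) 1 : ℕ × ℕ → 𝕜) r • (x ^ r.1 * y ^ r.2)) := by
          rw [(hasSum_pi_single_one_smul (fun r : ℕ × ℕ => x ^ r.1 * y ^ r.2) (i, j)).tsum_eq]
      _ = ∑' r, (Pi.single (i, j) 1 : ℕ × ℕ → 𝕜) r • (s ^ r.1 * t ^ r.2) :=
          hf _ (hasSum_norm_pi_single_one_mul _ (i, j)).summable
      _ = s ^ i * t ^ j :=
          (hasSum_pi_single_one_smul (fun r : ℕ × ℕ => s ^ r.1 * t ^ r.2) (i, j)).tsum_eq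
  have hdense := dense_span_of_forall_eq_tsum (R := 𝕜) (e := fun p : ℕ × ℕ => x ^ p.1 * y ^ p.2)
    fun z => (hsurj z).imp fun a ha => ⟨summable_smul_of_summable_norm_mul he ha.1, ha.2⟩
  have hf_mul := f.map_mul_of_dense_span hdense <| by
    rintro _ ⟨p, rfl⟩ _ ⟨r, rfl⟩
    rw [monomial_mul_monomial_of_mul_eq_smul hxy, map_smul, hf_monomial, hf_monomial,
      hf_monomial, monomial_mul_monomial_of_mul_eq_smul hst, smul_eq_mul]
  refine ⟨AlgHom.ofLinearMap f ?_ hf_mul, f.continuous, hf⟩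
  simpa using hf_monomial 0 0

end QuantumPlane

theorem eq_zero_of_tsum_mul_pow_eventually_eq_zero {𝕜 : Type*} [NontriviallyNormedField 𝕜]
    [CompleteSpace 𝕜] {g : ℕ → 𝕜} {r : ℝ} (hr : 0 < r)
    (hg : Summable fun i => ‖g i‖ * r ^ i) (h : ∀ᶠ s in 𝓝 0, ∑' i, g i * s ^ i = 0) :
    g = 0 := by
  set p := FormalMultilinearSeries.ofScalars 𝕜 g
  have hr_le : (r.toNNReal : ENNReal) ≤ p.radius := by
    refine p.le_radius_of_summable_norm ?_
    simpa [p, FormalMultilinearSeries.ofScalars_norm, Real.coe_toNNReal _ hr.le] using hg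
  have hp := (p.hasFPowerSeriesOnBall (hr_le.trans_lt' (by simpa using hr))).hasFPowerSeriesAt
  have hsum : p.sum =ᶠ[𝓝 0] 0 := h.mono fun s hs => by
    simpa [p, FormalMultilinearSeries.sum, FormalMultilinearSeries.ofScalars] using hs
  exact (FormalMultilinearSeries.ofScalars_series_eq_zero 𝕜).mp (hp.eq_zero_of_eventually hsum)

theorem tsum_mul_pow_mul_zero_pow {R : Type*} [Semiring R] [TopologicalSpace R]
    (g : ℕ × ℕ → R) (s : R) :
    ∑' p : ℕ × ℕ, g p * (s ^ p.1 * 0 ^ p.2) = ∑' i : ℕ, g (i, 0) * s ^ i := by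
  rw [← (Prod.mk_left_injective 0).tsum_eq]
  · simp
  · rintro ⟨i, k⟩ hp
    obtain rfl : k = 0 := by by_contra hk; simp [hk] at hp
    exact ⟨i, rfl⟩

theorem tsum_mul_zero_pow_mul_pow {R : Type*} [Semiring R] [TopologicalSpace R]
    (g : ℕ × ℕ → R) (t : R) :
    ∑' p : ℕ × ℕ, g p * (0 ^ p.1 * t ^ p.2) = ∑' k : ℕ, g (0, k) * t ^ k := by
  rw [← (Prod.mk_right_injective 0).tsum_eq]
  · simp
  · rintro ⟨i, k⟩ hp
    obtain rfl : i = 0 := by by_contra hi; simp [hi] at hp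
    exact ⟨k, rfl⟩

theorem eq_zero_on_axes_of_tsum_mul_pow_mul_pow_eq_zero {𝕜 : Type*} [NontriviallyNormedField 𝕜]
    [CompleteSpace 𝕜] {ρ : ℝ} (hρ : 0 < ρ) {a : ℕ × ℕ → 𝕜}
    (ha : Summable fun p : ℕ × ℕ => ‖a p‖ * ρ ^ (p.1 + p.2))
    (h : ∀ s t : 𝕜, ‖s‖ ≤ ρ → ‖t‖ ≤ ρ → s * t = 0 → ∑' p : ℕ × ℕ, a p * (s ^ p.1 * t ^ p.2) = 0)
    (p : ℕ × ℕ) (hp : p.1 = 0 ∨ p.2 = 0) : a p = 0 := by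
  have hball : ∀ᶠ s : 𝕜 in 𝓝 0, ‖s‖ ≤ ρ := by
    filter_upwards [Metric.closedBall_mem_nhds (0 : 𝕜) hρ] with s hs
    simpa using hs
  have hρ0 : ‖(0 : 𝕜)‖ ≤ ρ := by simpa using hρ.le
  have hx_axis : (fun i => a (i, 0)) = 0 :=
    eq_zero_of_tsum_mul_pow_eventually_eq_zero hρ
      (by simpa [Function.comp_def] using ha.comp_injective (Prod.mk_left_injective 0))
      (hball.mono fun s hs => by
        rw [← tsum_mul_pow_mul_zero_pow]; exact h s 0 hs hρ0 (mul_zero s))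
  have hy_axis : (fun k => a (0, k)) = 0 :=
    eq_zero_of_tsum_mul_pow_eventually_eq_zero hρ
      (by simpa [Function.comp_def] using ha.comp_injective (Prod.mk_right_injective 0))
      (hball.mono fun t ht => by
        rw [← tsum_mul_zero_pow_mul_pow]; exact h 0 t hρ0 ht (zero_mul t))
  obtain ⟨i, k⟩ := p
  rcases hp with rfl | rfl
  exacts [congrFun hy_axis k, congrFun hx_axis i]

theorem Aqrho_characters_kernel_general {A : Type*} [NormedRing A] [NormedAlgebra ℂ A]
    [CompleteSpace A]
    (q : ℂ) (hq1 : q ≠ 1) (ρ : ℝ) (hρ : 0 < ρ)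
    (x y : A) (hxy : y * x = q • (x * y))
    (hnorm : ∀ a : ℕ × ℕ → ℂ, (Summable fun p : ℕ × ℕ => ‖a p‖ * ρ ^ (p.1 + p.2)) →
      ‖∑' p : ℕ × ℕ, a p • (x ^ p.1 * y ^ p.2)‖ = ∑' p : ℕ × ℕ, ‖a p‖ * ρ ^ (p.1 + p.2))
    (hsurj : ∀ z : A, ∃ a : ℕ × ℕ → ℂ,
      (Summable fun p : ℕ × ℕ => ‖a p‖ * ρ ^ (p.1 + p.2)) ∧
      z = ∑' p : ℕ × ℕ, a p • (x ^ p.1 * y ^ p.2)) :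
    (∀ χ : A →ₐ[ℂ] ℂ, Continuous χ → ∀ z ∈ IxySet ρ x y, χ z = 0) ∧
    {w : A | ∀ χ : A →ₐ[ℂ] ℂ, Continuous χ → χ w = 0} = IxySet ρ x y := by
  have hIxy : ∀ χ : A →ₐ[ℂ] ℂ, Continuous χ → ∀ z ∈ IxySet ρ x y, χ z = 0 := by
    rintro χ hχ _ ⟨a, -, ha, rfl⟩
    exact χ.map_tsum_monomial_eq_zero hq1 hxy hχ ha
  refine ⟨hIxy, Set.Subset.antisymm (fun w hw => ?_) fun w hw χ hχ => hIxy χ hχ w hw⟩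
  obtain ⟨a, ha, rfl⟩ := hsurj w
  refine ⟨a, ha, eq_zero_on_axes_of_tsum_mul_pow_mul_pow_eq_zero hρ ha fun s t hs ht hst => ?_, rfl⟩
  obtain ⟨χ, hχ, hχa⟩ := exists_continuous_algHom_tsum_monomial_eq hρ hxy hnorm hsurj hs ht
    (by rw [mul_comm, hst, smul_zero])
  rw [← hχa a ha]
  exact hw χ hχ

/-- In the Banach algebra `A_q(ρ)` (realized as a complex unital Banach algebra generated by
`x, y` with `y x = q x y`, `|q| ≤ 1`, `q ≠ 1`, in which every element is a series
`Σ a_{ik} x^i y^k` of norm `Σ |a_{ik}| ρ^{i+k}`), every continuous character vanishes on the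
closed two-sided ideal `I_xy = {Σ_{i,k ≥ 1} a_{ik} x^i y^k}`, and the common kernel of all
continuous characters equals `I_xy`. -/
theorem Aqrho_characters_kernel {A : Type*} [NormedRing A] [NormedAlgebra ℂ A]
    [CompleteSpace A]
    (q : ℂ) (hq : ‖q‖ ≤ 1) (hq1 : q ≠ 1) (ρ : ℝ) (hρ : 0 < ρ)
    (x y : A) (hxy : y * x = q • (x * y))
    (hnorm : ∀ a : ℕ × ℕ → ℂ, (Summable fun p : ℕ × ℕ => ‖a p‖ * ρ ^ (p.1 + p.2)) →
      ‖∑' p : ℕ × ℕ, a p • (x ^ p.1 * y ^ p.2)‖ = ∑' p : ℕ × ℕ, ‖a p‖ * ρ ^ (p.1 + p.2))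
    (hsurj : ∀ z : A, ∃ a : ℕ × ℕ → ℂ,
      (Summable fun p : ℕ × ℕ => ‖a p‖ * ρ ^ (p.1 + p.2)) ∧
      z = ∑' p : ℕ × ℕ, a p • (x ^ p.1 * y ^ p.2)) :
    (∀ χ : A →ₐ[ℂ] ℂ, Continuous χ → ∀ z ∈ IxySet ρ x y, χ z = 0) ∧
    {w : A | ∀ χ : A →ₐ[ℂ] ℂ, Continuous χ → χ w = 0} = IxySet ρ x y :=
  Aqrho_characters_kernel_general q hq1 ρ hρ x y hxy hnorm hsurj
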